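/- Let $(A_n)$ and $(B_n)$ be sequences of events on a probability space such that: (i) $\mathbb{P}(A_n) \to 1$; (ii) $\mathbb{P}(\limsup B_n) = 1$; and (iii) for each $k$, letting $\tau_k = \min\{n \ge k : B_n \text{ occurs}\}$, the event $\{\tau_k = n\}$ is independent of $A_n$ for every $n \ge k$. Then $\mathbb{P}(\limsup (A_n \cap B_n)) = 1$. -/
import Mathlib


open MeasureTheory ProbabilityTheory Filter

/-- If `P(A n) → 1`, `P(limsup B) = 1`, and for each `k ≤ n` the event
`{τ_k = n}` (first occurrence of the `B`'s at or after time `k` is at time `n`, i.e.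
`B n` minus `B m` for `k ≤ m < n`) is independent of `A n`, then
`P(limsup (A n ∩ B n)) = 1`. -/
theorem stmt13
    {Ω : Type*} [MeasurableSpace Ω] (P : Measure Ω) [IsProbabilityMeasure P]
    (A B : ℕ → Set Ω)
    (hAmeas : ∀ n, MeasurableSet (A n)) (hBmeas : ∀ n, MeasurableSet (B n))
    (hA : Tendsto (fun n => P (A n)) atTop (nhds 1))
    (hB : P (Filter.limsup B atTop) = 1)
    (hindep : ∀ k n, k ≤ n →
      IndepSet (B n ∩ ⋂ m ∈ Finset.Ico k n, (B m)ᶜ) (A n) P) :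
    P (Filter.limsup (fun n => A n ∩ B n) atTop) = 1 := by
  classical
  set S : ℕ → Set Ω := fun k => ⋃ n, ⋃ _ : k ≤ n, A n ∩ B n with hS
  have hSmeas : ∀ k, MeasurableSet (S k) := fun k =>
    MeasurableSet.iUnion fun n => MeasurableSet.iUnion fun _ => (hAmeas n).inter (hBmeas n)
  -- key claim : each S k has full measure
  have key : ∀ k, P (S k) = 1 := by
    intro k
    refine le_antisymm prob_le_one (le_of_forall_lt_imp_le_of_dense fun ε hε => ?_)
    have hA' : ∀ᶠ n in atTop, ε ≤ P (A n) := hA.eventually (eventually_ge_nhds hε)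
    obtain ⟨j0, hj0⟩ := eventually_atTop.mp hA'
    set j : ℕ := max j0 k with hj
    have hjk : k ≤ j := le_max_right _ _
    have hjε : ∀ i : ℕ, ε ≤ P (A (j + i)) := fun i =>
      hj0 _ (le_trans (le_max_left _ _) (Nat.le_add_right _ _))
    set C : ℕ → Set Ω := fun i => B (j + i) ∩ ⋂ m ∈ Finset.Ico j (j + i), (B m)ᶜ with hC
    have hCm : ∀ i, MeasurableSet (C i) := fun i =>
      (hBmeas _).inter (Finset.measurableSet_biInter _ fun m _ => (hBmeas m).compl)
    -- disjointness
    have hdisj : Pairwise (Function.onFun Disjoint C) := by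
      intro a b hab
      wlog h : a < b generalizing a b
      · exact (this hab.symm (hab.lt_or_gt.resolve_left h)).symm
      refine Set.disjoint_left.mpr fun ω hωa hωb => ?_
      have h1 : ω ∈ B (j + a) := hωa.1
      have h2 : ω ∉ B (j + a) := by
        have := hωb.2
        simp only [Set.mem_iInter] at this
        exact this (j + a) (Finset.mem_Ico.mpr ⟨Nat.le_add_right _ _, by omega⟩)
      exact h2 h1
    -- union of C's has full measure
    have hCuB : (⋃ i, B (j + i)) ⊆ ⋃ i, C i := by
      intro ω hω
      rw [Set.mem_iUnion] at hω
      have hex : ∃ i, ω ∈ B (j + i) := hω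
      set i0 := Nat.find hex with hi0
      refine Set.mem_iUnion.mpr ⟨i0, Nat.find_spec hex, ?_⟩
      simp only [Set.mem_iInter]
      intro m hm
      rw [Finset.mem_Ico] at hm
      have : m = j + (m - j) := by omega
      rw [this]
      exact Nat.find_min hex (by omega)
    have hlimB : Filter.limsup B atTop ⊆ ⋃ i, B (j + i) := by
      rw [limsup_eq_iInf_iSup_of_nat]
      intro ω hω
      have : ω ∈ ⨆ i ≥ j, B i := by
        have := Set.mem_iInter.mp hω j
        simpa using this
      simp only [Set.iSup_eq_iUnion, Set.mem_iUnion] at this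
      obtain ⟨n, hn, hωn⟩ := this
      exact Set.mem_iUnion.mpr ⟨n - j, by rw [show j + (n - j) = n by omega]; exact hωn⟩
    have hCone : P (⋃ i, C i) = 1 :=
      le_antisymm prob_le_one (hB ▸ measure_mono (hlimB.trans hCuB))
    -- independence
    have hmul : ∀ i, P (C i ∩ A (j + i)) = P (C i) * P (A (j + i)) := fun i =>
      (hindep j (j + i) (Nat.le_add_right _ _)).measure_inter_eq_mul
    -- disjoint intersected family
    have hdisj2 : Pairwise (Function.onFun Disjoint fun i => C i ∩ A (j + i)) := fun a b hab =>
      (hdisj hab).mono Set.inter_subset_left Set.inter_subset_left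
    have hsub : (⋃ i, C i ∩ A (j + i)) ⊆ S k := by
      refine Set.iUnion_subset fun i => ?_
      intro ω hω
      exact Set.mem_iUnion.mpr ⟨j + i, Set.mem_iUnion.mpr ⟨hjk.trans (Nat.le_add_right _ _),
        ⟨hω.2, hω.1.1⟩⟩⟩
    calc ε = ε * P (⋃ i, C i) := by rw [hCone, mul_one]
      _ = ε * ∑' i, P (C i) := by rw [measure_iUnion hdisj hCm]
      _ = ∑' i, ε * P (C i) := ENNReal.tsum_mul_left.symm
      _ ≤ ∑' i, P (A (j + i)) * P (C i) :=
          ENNReal.tsum_le_tsum fun i => mul_le_mul_left (hjε i) _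
      _ = ∑' i, P (C i ∩ A (j + i)) := by
          refine tsum_congr fun i => ?_
          rw [hmul i, mul_comm]
      _ = P (⋃ i, C i ∩ A (j + i)) :=
          (measure_iUnion hdisj2 fun i => (hCm i).inter (hAmeas _)).symm
      _ ≤ P (S k) := measure_mono hsub
  -- conclude
  have hlim : Filter.limsup (fun n => A n ∩ B n) atTop = ⋂ k, S k := by
    rw [limsup_eq_iInf_iSup_of_nat]
    simp only [hS, Set.iInf_eq_iInter, Set.iSup_eq_iUnion, ge_iff_le]
  rw [hlim]
  have hcompl : P ((⋂ k, S k)ᶜ) = 0 := by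
    rw [Set.compl_iInter]
    refine measure_iUnion_null fun k => ?_
    rw [prob_compl_eq_zero_iff (hSmeas k)]
    exact key k
  have := prob_compl_eq_zero_iff (MeasurableSet.iInter fun k => hSmeas k) |>.mp hcompl
  exact this
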